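/- Let G be a finite simple graph and let D ⊆ V(G) be a set of vertices each of which has at least 2 neighbours in V(G) \ D. Let H denote the bipartite graph obtained from G by deleting all edges with both endpoints in D and all edges with both endpoints in V(G) \ D. Then Δ(G) ≥ ∏_{v ∈ D} (d_H(v) − 1), where d_H(v) is the degree of v in H. -/
import Mathlib


open scoped Classical

/-- The constraint matrix `M(G) = [[I, B], [Bᵀ, I]]` of the total matching IP,
with rows and columns indexed by `V(G) ⊔ E(G)`. -/
noncomputable def totalMatrix {V : Type*} (G : SimpleGraph V) :
    Matrix (V ⊕ G.edgeSet) (V ⊕ G.edgeSet) ℤ := fun a b =>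
  match a, b with
  | Sum.inl v, Sum.inl w => if v = w then 1 else 0
  | Sum.inl v, Sum.inr e => if v ∈ (e : Sym2 V) then 1 else 0
  | Sum.inr e, Sum.inl v => if v ∈ (e : Sym2 V) then 1 else 0
  | Sum.inr e, Sum.inr f => if e = f then 1 else 0

/-- `Δ(G)`: the maximum absolute value of the determinant of a square submatrix of `M(G)`
(the empty submatrix, of determinant `1`, is allowed). -/
noncomputable def maxSubdet {V : Type*} (G : SimpleGraph V) : ℕ :=
  sSup {d : ℕ | ∃ (k : ℕ) (f g : Fin k → (V ⊕ G.edgeSet)),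
    Function.Injective f ∧ Function.Injective g ∧
    d = ((totalMatrix G).submatrix f g).det.natAbs}

/-! ### Auxiliary lemmas -/

lemma natAbs_finset_prod {β : Type*} (s : Finset β) (f : β → ℤ) :
    (∏ i ∈ s, f i).natAbs = ∏ i ∈ s, (f i).natAbs := by
  induction s using Finset.cons_induction with
  | empty => simp
  | cons a s ha ih => rw [Finset.prod_cons, Finset.prod_cons, Int.natAbs_mul, ih]

/-- Determinant of a block diagonal matrix indexed by a sigma type. -/
lemma det_sigma_block {ι : Type*} [Fintype ι] {m : ι → Type*} [∀ i, Fintype (m i)]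
    [∀ i, DecidableEq (m i)] (M : Matrix (Σ i, m i) (Σ i, m i) ℤ)
    (h : ∀ x y : Σ i, m i, x.1 ≠ y.1 → M x y = 0) :
    M.det = ∏ i : ι, Matrix.det (Matrix.of fun a b : m i => M ⟨i, a⟩ ⟨i, b⟩) := by
  have hdf : M.det = ∏ k : ι, (M.toSquareBlock Sigma.fst k).det := by
    letI : LinearOrder ι := IsWellOrder.linearOrder WellOrderingRel
    have hbt : M.BlockTriangular Sigma.fst := fun x y hlt => h x y (ne_of_gt hlt)
    convert Matrix.BlockTriangular.det_fintype hbt using 3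
  refine hdf.trans ?_
  refine Finset.prod_congr rfl fun i _ => ?_
  let e : m i ≃ {a : Σ j, m j // a.1 = i} :=
  { toFun := fun x => ⟨⟨i, x⟩, rfl⟩
    invFun := fun a => a.2 ▸ a.1.2
    left_inv := fun x => rfl
    right_inv := by rintro ⟨⟨j, x⟩, rfl⟩; rfl }
  rw [← Matrix.det_submatrix_equiv_self e]
  rfl

/-- The star block matrix `[[1, 1ᵀ],[1, I]]`. -/
noncomputable def starB (α : Type*) : Matrix (Option α) (Option α) ℤ := fun a b =>
  match a, b with
  | none, none => 1
  | none, some _ => 1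
  | some _, none => 1
  | some x, some y => if x = y then 1 else 0

lemma det_starB (α : Type*) [Fintype α] [DecidableEq α] :
    (starB α).det = 1 - (Fintype.card α : ℤ) := by
  let e : α ⊕ Unit ≃ Option α := (Equiv.optionEquivSumPUnit α).symm
  have h1 : (starB α).submatrix e e =
      Matrix.fromBlocks 1 (Matrix.of fun _ _ => (1 : ℤ)) (Matrix.of fun _ _ => 1) 1 := by
    ext a b
    cases a <;> cases b <;>
      simp [starB, e, Matrix.fromBlocks, Matrix.one_apply, Equiv.optionEquivSumPUnit]
  have h2 : (1 : Matrix α α ℤ) -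
        ((Matrix.of fun _ _ => (1 : ℤ)) : Matrix α Unit ℤ) *
          ((Matrix.of fun _ _ => (1 : ℤ)) : Matrix Unit α ℤ) =
      1 + Matrix.replicateCol Unit (fun _ => (-1 : ℤ)) * Matrix.replicateRow Unit (fun _ => (1 : ℤ)) := by
    ext a b
    simp [Matrix.mul_apply, Matrix.sub_apply, Matrix.add_apply, Matrix.replicateCol, Matrix.replicateRow,
      sub_eq_add_neg]
  rw [← Matrix.det_submatrix_equiv_self e, h1, Matrix.det_fromBlocks_one₂₂, h2,
    Matrix.det_one_add_replicateCol_mul_replicateRow]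
  simp [dotProduct, sub_eq_add_neg]

lemma totalMatrix_entry_abs_le {V : Type*} (G : SimpleGraph V) (a b : V ⊕ G.edgeSet) :
    |totalMatrix G a b| ≤ 1 := by
  rcases a with v | e <;> rcases b with w | f <;> simp only [totalMatrix] <;> split <;> simp

lemma subdet_mem_le {V : Type*} [Fintype V] (G : SimpleGraph V) {d : ℕ}
    (hd : d ∈ {d : ℕ | ∃ (k : ℕ) (f g : Fin k → (V ⊕ G.edgeSet)),
      Function.Injective f ∧ Function.Injective g ∧
      d = ((totalMatrix G).submatrix f g).det.natAbs}) :
    d ≤ maxSubdet G := by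
  have hbdd : BddAbove {d : ℕ | ∃ (k : ℕ) (f g : Fin k → (V ⊕ G.edgeSet)),
      Function.Injective f ∧ Function.Injective g ∧
      d = ((totalMatrix G).submatrix f g).det.natAbs} := by
    refine ⟨(Fintype.card (V ⊕ G.edgeSet)).factorial, ?_⟩
    rintro d ⟨k, f, g, hf, hg, rfl⟩
    have hk : k ≤ Fintype.card (V ⊕ G.edgeSet) := by
      simpa using Fintype.card_le_of_injective f hf
    have h1 : |((totalMatrix G).submatrix f g).det| ≤ (Nat.factorial k : ℤ) := by
      rw [Matrix.det_apply]
      refine le_trans (Finset.abs_sum_le_sum_abs _ _) ?_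
      have hterm : ∀ σ ∈ (Finset.univ : Finset (Equiv.Perm (Fin k))),
          |Equiv.Perm.sign σ • ∏ i, ((totalMatrix G).submatrix f g) (σ i) i| ≤ 1 := by
        intro σ _
        have habs : |Equiv.Perm.sign σ • ∏ i, ((totalMatrix G).submatrix f g) (σ i) i| =
            |∏ i, ((totalMatrix G).submatrix f g) (σ i) i| := by
          rcases Int.units_eq_one_or (Equiv.Perm.sign σ) with h | h <;>
            rw [h] <;> simp [Units.smul_def]
        rw [habs, Finset.abs_prod]
        refine Finset.prod_le_one (fun i _ => abs_nonneg _) fun i _ => ?_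
        exact totalMatrix_entry_abs_le G _ _
      refine le_trans (Finset.sum_le_card_nsmul _ _ 1 hterm) ?_
      simp [Fintype.card_perm]
    have h2 : (((totalMatrix G).submatrix f g).det.natAbs : ℤ) ≤ (Nat.factorial k : ℤ) := by
      rwa [← Int.abs_eq_natAbs]
    have h3 : ((totalMatrix G).submatrix f g).det.natAbs ≤ Nat.factorial k := by
      exact_mod_cast h2
    exact h3.trans (Nat.factorial_le hk)
  exact le_csSup hbdd hd

/-- Let `D ⊆ V(G)` be a set of vertices each having at least two neighbours in `V(G) ∖ D`,
and let `H` be the bipartite graph obtained from `G` by deleting all edges contained in `D`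
or in `V(G) ∖ D`. Then `Δ(G) ≥ ∏_{v ∈ D} (d_H(v) - 1)`. -/
theorem stmt10 {V : Type*} [Fintype V] (G : SimpleGraph V) (D : Finset V)
    (hD : ∀ v ∈ D, 2 ≤ (Finset.univ.filter fun u => G.Adj v u ∧ u ∉ D).card)
    (H : SimpleGraph V)
    (hH : ∀ a b : V, H.Adj a b ↔
      (G.Adj a b ∧ ((a ∈ D ∧ b ∉ D) ∨ (a ∉ D ∧ b ∈ D)))) :
    ∏ v ∈ D, (H.degree v - 1) ≤ maxSubdet G := by
  classical
  have hle : H ≤ G := fun a b h => ((hH a b).1 h).1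
  -- every H-edge contains at most one vertex of D
  have key : ∀ (e : Sym2 V), e ∈ H.edgeSet → ∀ v w : V, v ∈ D → w ∈ D →
      v ∈ e → w ∈ e → v = w := by
    intro e
    induction e using Sym2.ind with
    | _ a b =>
      intro he v w hv hw hve hwe
      rw [Sym2.mem_iff] at hve hwe
      rw [SimpleGraph.mem_edgeSet, hH] at he
      rcases he.2 with ⟨ha, hb⟩ | ⟨ha, hb⟩ <;>
        rcases hve with rfl | rfl <;> rcases hwe with rfl | rfl <;>
        first | rfl | (exfalso; tauto)
  -- the index type: for each `v ∈ D`, the vertex `v` together with its `H`-incident edges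
  let α : V → Type _ := fun v => ↥(H.incidenceSet v)
  let ι : (Σ v : {x // x ∈ D}, Option (α ↑v)) → V ⊕ G.edgeSet := fun x =>
    match x with
    | ⟨v, none⟩ => Sum.inl ↑v
    | ⟨v, some e⟩ => Sum.inr ⟨↑e, SimpleGraph.edgeSet_mono hle e.2.1⟩
  have hι : Function.Injective ι := by
    rintro ⟨v, ev⟩ ⟨w, ew⟩ h
    rcases ev with _ | e <;> rcases ew with _ | f
    · simp only [ι] at h
      obtain rfl : v = w := Subtype.ext (Sum.inl.inj h)
      rfl
    · exact absurd h (by simp [ι])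
    · exact absurd h (by simp [ι])
    · simp only [ι, Sum.inr.injEq, Subtype.mk.injEq] at h
      have hw : (↑w : V) ∈ (e : Sym2 V) := by rw [h]; exact f.2.2
      obtain rfl : v = w := Subtype.ext (key ↑e e.2.1 ↑v ↑w v.2 w.2 e.2.2 hw)
      obtain rfl : e = f := Subtype.ext h
      rfl
  let A := (totalMatrix G).submatrix ι ι
  have hA0 : ∀ x y : (Σ v : {x // x ∈ D}, Option (α ↑v)), x.1 ≠ y.1 → A x y = 0 := by
    rintro ⟨v, ev⟩ ⟨w, ew⟩ hne
    have hvw : (↑v : V) ≠ ↑w := fun hc => hne (Subtype.ext hc)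
    rcases ev with _ | e <;> rcases ew with _ | f
    · show (if (↑v : V) = ↑w then (1 : ℤ) else 0) = 0
      rw [if_neg hvw]
    · show (if (↑v : V) ∈ (f : Sym2 V) then (1 : ℤ) else 0) = 0
      rw [if_neg]
      intro hc
      exact hvw (key ↑f f.2.1 ↑v ↑w v.2 w.2 hc f.2.2)
    · show (if (↑w : V) ∈ (e : Sym2 V) then (1 : ℤ) else 0) = 0
      rw [if_neg]
      intro hc
      exact hvw (key ↑e e.2.1 ↑v ↑w v.2 w.2 e.2.2 hc)
    · show (if (⟨↑e, SimpleGraph.edgeSet_mono hle e.2.1⟩ : G.edgeSet) =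
          ⟨↑f, SimpleGraph.edgeSet_mono hle f.2.1⟩ then (1 : ℤ) else 0) = 0
      rw [if_neg]
      intro hc
      have h' : (↑e : Sym2 V) = ↑f := congrArg (fun x : G.edgeSet => (x : Sym2 V)) hc
      exact hvw (key ↑e e.2.1 ↑v ↑w v.2 w.2 e.2.2 (h' ▸ f.2.2))
  have hblock : ∀ v : {x // x ∈ D},
      (Matrix.of fun a b : Option (α ↑v) => A ⟨v, a⟩ ⟨v, b⟩) = starB (α ↑v) := by
    intro v
    ext a b
    rcases a with _ | e <;> rcases b with _ | f
    · show (if (↑v : V) = ↑v then (1 : ℤ) else 0) = starB _ none none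
      simp [starB]
    · show (if (↑v : V) ∈ (f : Sym2 V) then (1 : ℤ) else 0) = starB _ none (some f)
      simp [starB, f.2.2]
    · show (if (↑v : V) ∈ (e : Sym2 V) then (1 : ℤ) else 0) = starB _ (some e) none
      simp [starB, e.2.2]
    · show (if (⟨↑e, SimpleGraph.edgeSet_mono hle e.2.1⟩ : G.edgeSet) =
          ⟨↑f, SimpleGraph.edgeSet_mono hle f.2.1⟩ then (1 : ℤ) else 0) = starB _ (some e) (some f)
      by_cases hef : e = f
      · subst hef
        simp [starB]
      · have hne : (⟨(↑e : Sym2 V), SimpleGraph.edgeSet_mono hle e.2.1⟩ : G.edgeSet) ≠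
            ⟨↑f, SimpleGraph.edgeSet_mono hle f.2.1⟩ :=
          by
          intro hc
          have h' : (↑e : Sym2 V) = (↑f : Sym2 V) := congrArg (fun x : G.edgeSet => (x : Sym2 V)) hc
          exact hef (Subtype.ext h')
        rw [if_neg hne]
        simp [starB, hef]
  have hdetA : A.det = ∏ v : {x // x ∈ D}, (1 - (Fintype.card (α ↑v) : ℤ)) := by
    have h1 : A.det =
        ∏ v : {x // x ∈ D}, (Matrix.of fun a b : Option (α ↑v) => A ⟨v, a⟩ ⟨v, b⟩).det := by
      convert det_sigma_block A hA0 using 3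
    rw [h1]
    refine Finset.prod_congr rfl fun v _ => ?_
    rw [hblock v]
    convert det_starB (α ↑v) using 2
  have hcard : ∀ v : {x // x ∈ D}, Fintype.card (α ↑v) = H.degree ↑v := fun v =>
    (Fintype.card_congr (Equiv.refl _)).trans (H.card_incidenceSet_eq_degree ↑v)
  have hdeg : ∀ v ∈ D, 2 ≤ H.degree v := by
    intro v hv
    have hnb : H.neighborFinset v = Finset.univ.filter fun u => G.Adj v u ∧ u ∉ D := by
      ext u
      simp only [SimpleGraph.mem_neighborFinset, Finset.mem_filter, Finset.mem_univ, true_and, hH]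
      constructor
      · rintro ⟨hadj, h⟩
        refine ⟨hadj, ?_⟩
        tauto
      · rintro ⟨hadj, hu⟩
        exact ⟨hadj, Or.inl ⟨hv, hu⟩⟩
    rw [← SimpleGraph.card_neighborFinset_eq_degree, hnb]
    exact hD v hv
  have hnat : A.det.natAbs = ∏ v ∈ D, (H.degree v - 1) := by
    rw [hdetA, natAbs_finset_prod]
    have : ∀ v : {x // x ∈ D}, (1 - (Fintype.card (α ↑v) : ℤ)).natAbs = H.degree ↑v - 1 := by
      intro v
      rw [hcard v]
      have := hdeg ↑v v.2
      omega
    rw [Finset.prod_congr rfl fun v _ => this v]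
    exact Finset.prod_coe_sort D fun v => H.degree v - 1
  rw [← hnat]
  refine subdet_mem_le G ?_
  refine ⟨Fintype.card (Σ v : {x // x ∈ D}, Option (α ↑v)),
    ι ∘ (Fintype.equivFin _).symm, ι ∘ (Fintype.equivFin _).symm,
    hι.comp (Fintype.equivFin _).symm.injective, hι.comp (Fintype.equivFin _).symm.injective, ?_⟩
  have hsub : (totalMatrix G).submatrix (ι ∘ (Fintype.equivFin _).symm)
      (ι ∘ (Fintype.equivFin _).symm) = A.submatrix (Fintype.equivFin _).symm
      (Fintype.equivFin _).symm := rfl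
  rw [hsub, Matrix.det_submatrix_equiv_self]
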